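/- The cone with Lipschitz non-flat angle is not s-minimal via the Euler–Lagrange equation: if E₀₀ ⊆ ℝ² satisfies E₀₀ ∩ {x₁ < 0} = {x₁ < 0, x₂ < 0} and E₀₀ ∩ {x₁ > 0} = {x₂ < b x₁, x₁ > 0} for some b ≠ 0, then at the point p = (1,b) the s-mean curvature p.v. ∫_{ℝ²} (χ_{ℝ²\E₀₀}(y) − χ_{E₀₀}(y)) |p−y|^{−(2+s)} dy is nonzero. -/

import Mathlib

/-!
In coordinates `x₁ = y 0`, `x₂ = y 1`, let `E = coneSet b` and let `H = belowLine b` be the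
halfplane below the line `x₂ = b x₁`, whose boundary passes through `p`. Split the integrand as
`(χ_{Eᶜ} - χ_E) k = (χ_{Hᶜ} - χ_H) k + 2 (χ_H - χ_E) k`. The point reflection `y ↦ 2p - y`
exchanges `H` and `Hᶜ` off a null line and preserves both the kernel `k` and `(B_ε(p))ᶜ`, so
the first part integrates to zero over every `(B_ε(p))ᶜ`. The second part is supported in
`E ∆ H ⊆ {x₁ < 0}`, at distance at least `1` from `p`: it is integrable and its integral over
`(B_ε(p))ᶜ` does not depend on `ε ≤ 1`. It does not vanish, because `E ⊆ H` or `H ⊆ E`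
according to the sign of `b`, so `χ_H - χ_E = ±χ_{E ∆ H}`, and for `b ≠ 0` the set `E ∆ H`
contains the open wedge between the lines `x₂ = 0` and `x₂ = b x₁` over `x₁ < 0`.
-/

open MeasureTheory Set Filter
open scoped ENNReal Topology

/-- The cone which is the lower halfplane for `x₁ < 0` and the subgraph of the line
`x₂ = b x₁` for `x₁ ≥ 0`. -/
def coneSet (b : ℝ) : Set (EuclideanSpace ℝ (Fin 2)) :=
  {x | (x 0 < 0 ∧ x 1 < 0) ∨ (0 ≤ x 0 ∧ x 1 < b * x 0)}

open Metric

theorem integral_eq_zero_of_ae_apply_sub_eq_neg {G : Type*} [MeasurableSpace G] [AddGroup G]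
    [MeasurableAdd G] [MeasurableNeg G] {μ : Measure G} [μ.IsNegInvariant]
    [μ.IsAddLeftInvariant] {F : G → ℝ} (a : G) (hF : ∀ᵐ y ∂μ, F (a - y) = -F y) :
    ∫ y, F y ∂μ = 0 := by
  have h := integral_sub_left_eq_self F μ a
  rw [integral_congr_ae hF, integral_neg] at h
  linarith

theorem Real.rpow_neg_le_mul_one_add_rpow_neg {ε r t : ℝ} (hε : 0 < ε) (hr : ε ≤ r)
    (ht : 0 ≤ t) : r ^ (-t) ≤ (1 + ε⁻¹) ^ t * (1 + r) ^ (-t) := by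
  have hr0 : 0 < r := hε.trans_le hr
  have h : (1 + ε⁻¹)⁻¹ * (1 + r) ≤ r := by
    rw [inv_mul_le_iff₀ (by positivity), add_mul, one_mul, add_comm]
    gcongr
    rwa [le_inv_mul_iff₀ hε, mul_one]
  calc r ^ (-t) ≤ ((1 + ε⁻¹)⁻¹ * (1 + r)) ^ (-t) :=
        Real.rpow_le_rpow_of_nonpos (by positivity) h (neg_nonpos.mpr ht)
    _ = (1 + ε⁻¹) ^ t * (1 + r) ^ (-t) := by
      rw [Real.mul_rpow (by positivity) (by positivity), Real.inv_rpow (by positivity),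
        ← Real.rpow_neg (by positivity), neg_neg]

theorem setIntegral_pos_of_pos_on {X : Type*} [MeasurableSpace X] {μ : Measure X} {f : X → ℝ}
    {s : Set X} (hs : MeasurableSet s) (hfs : IntegrableOn f s μ) (hf : ∀ x ∈ s, 0 < f x)
    (hμs : 0 < μ s) : 0 < ∫ x in s, f x ∂μ := by
  rw [setIntegral_pos_iff_support_of_nonneg_ae
    ((ae_restrict_iff' hs).2 (ae_of_all _ fun x hx => (hf x hx).le)) hfs]
  convert hμs using 2
  exact inter_eq_right.2 fun x hx => Function.mem_support.2 (hf x hx).ne'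

section IndicatorDifference

variable {X : Type*} {A B : Set X} {k : X → ℝ}

theorem indicator_compl_sub_indicator_mul_eq_add (x : X) (c : ℝ) :
    (Aᶜ.indicator (fun _ => (1 : ℝ)) x - A.indicator (fun _ => (1 : ℝ)) x) * c
      = (Bᶜ.indicator (fun _ => (1 : ℝ)) x - B.indicator (fun _ => (1 : ℝ)) x) * c
        + 2 * ((B.indicator (fun _ => (1 : ℝ)) x - A.indicator (fun _ => (1 : ℝ)) x) * c) := by
  simp only [indicator_compl, Pi.sub_apply]
  ring

theorem indicator_one_sub_indicator_one_mul_of_subset (hAB : A ⊆ B) :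
    (fun x => (B.indicator (fun _ => (1 : ℝ)) x - A.indicator (fun _ => (1 : ℝ)) x) * k x)
      = (B \ A).indicator k := by
  ext x
  by_cases hxA : x ∈ A
  · simp [hxA, hAB hxA]
  · by_cases hxB : x ∈ B <;> simp [hxA, hxB]

variable [MeasurableSpace X] {μ : Measure X}

theorem integrableOn_indicator_one_sub_indicator_one_mul (hA : MeasurableSet A)
    (hB : MeasurableSet B) {s : Set X} (hk : IntegrableOn k s μ) :
    IntegrableOn (fun x => (B.indicator (fun _ => (1 : ℝ)) x
      - A.indicator (fun _ => (1 : ℝ)) x) * k x) s μ := by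
  refine hk.bdd_mul (c := 1) (Measurable.aestronglyMeasurable ?_) (ae_of_all _ fun x => ?_)
  · exact (measurable_const.indicator hB).sub (measurable_const.indicator hA)
  · by_cases hxA : x ∈ A <;> by_cases hxB : x ∈ B <;> simp [hxA, hxB]

theorem integral_indicator_one_sub_indicator_one_mul_ne_zero (hA : MeasurableSet A)
    (hB : MeasurableSet B) (hAB : A ⊆ B ∨ B ⊆ A) (hk : 0 < ∫ x in symmDiff A B, k x ∂μ) :
    ∫ x, (B.indicator (fun _ => (1 : ℝ)) x - A.indicator (fun _ => (1 : ℝ)) x) * k x ∂μ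
      ≠ 0 := by
  rcases hAB with hAB | hBA
  · rw [indicator_one_sub_indicator_one_mul_of_subset hAB, integral_indicator (hB.diff hA),
      ← symmDiff_of_le hAB]
    exact hk.ne'
  · rw [← neg_ne_zero, ← integral_neg]
    simp_rw [← neg_mul, neg_sub]
    rw [indicator_one_sub_indicator_one_mul_of_subset hBA, integral_indicator (hA.diff hB),
      ← symmDiff_of_ge hBA]
    exact hk.ne'

end IndicatorDifference

section HaarMeasure

variable {E : Type*} [NormedAddCommGroup E] [NormedSpace ℝ E] [FiniteDimensional ℝ E]
  [MeasurableSpace E] [BorelSpace E] {μ : Measure E} [μ.IsAddHaarMeasure]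

theorem integrableOn_compl_ball_norm_sub_rpow_neg {t : ℝ} (ht : Module.finrank ℝ E < t)
    (p : E) {ε : ℝ} (hε : 0 < ε) : IntegrableOn (fun y => ‖p - y‖ ^ (-t)) (ball p ε)ᶜ μ := by
  have hmaj : Integrable (fun y => (1 + ε⁻¹) ^ t * (1 + ‖p - y‖) ^ (-t)) μ :=
    ((integrable_one_add_norm ht).comp_sub_left p).const_mul _
  refine hmaj.integrableOn.mono' (Measurable.aestronglyMeasurable (by fun_prop)) ?_
  rw [ae_restrict_iff' measurableSet_ball.compl]
  refine ae_of_all _ fun y hy => ?_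
  rw [Real.norm_of_nonneg (by positivity)]
  refine Real.rpow_neg_le_mul_one_add_rpow_neg hε ?_ ((Nat.cast_nonneg _).trans ht.le)
  simpa [mem_ball, dist_eq_norm', not_lt] using hy

theorem addHaar_setOf_apply_eq_apply (ℓ : E →L[ℝ] ℝ) (hℓ : ℓ ≠ 0) (p : E) :
    μ {y | ℓ y = ℓ p} = 0 := by
  have h : {y | ℓ y = ℓ p} = (· + -p) ⁻¹' (LinearMap.ker (ℓ : E →ₗ[ℝ] ℝ) : Set E) := by
    ext y; simp [← sub_eq_add_neg, sub_eq_zero]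
  rw [h, measure_preimage_add_right]
  refine Measure.addHaar_submodule μ _ fun htop => hℓ ?_
  ext y
  simpa using (LinearMap.ker_eq_top.1 htop ▸ rfl : (ℓ : E →ₗ[ℝ] ℝ) y = 0)

theorem setIntegral_compl_ball_signed_halfspace_eq_zero {ℓ : E →L[ℝ] ℝ} (hℓ : ℓ ≠ 0)
    {c : ℝ} {p : E} (hp : ℓ p = c) {k : E → ℝ} (hk : ∀ y, k (p + p - y) = k y) (ε : ℝ) :
    ∫ y in (ball p ε)ᶜ, ({y | ℓ y < c}ᶜ.indicator (fun _ => (1 : ℝ)) y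
        - {y | ℓ y < c}.indicator (fun _ => (1 : ℝ)) y) * k y ∂μ = 0 := by
  subst hp
  rw [← integral_indicator measurableSet_ball.compl]
  refine integral_eq_zero_of_ae_apply_sub_eq_neg (p + p) ?_
  filter_upwards [measure_eq_zero_iff_ae_notMem.1 (addHaar_setOf_apply_eq_apply ℓ hℓ p)]
    with y (hy : ℓ y ≠ ℓ p)
  have hball : p + p - y ∈ ball p ε ↔ y ∈ ball p ε := by
    rw [mem_ball, mem_ball, dist_eq_norm, dist_eq_norm, ← norm_neg]
    congr! 2; abel
  have hhalf : p + p - y ∈ {y | ℓ y < ℓ p} ↔ y ∉ {y | ℓ y < ℓ p} := by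
    change ℓ (p + p - y) < ℓ p ↔ ¬ ℓ y < ℓ p
    rw [map_sub, map_add, not_lt]
    constructor <;> intro h
    · linarith
    · linarith [lt_of_le_of_ne h (Ne.symm hy)]
  by_cases hy1 : y ∈ ball p ε
  · rw [indicator_of_notMem (not_not.2 (hball.2 hy1)), indicator_of_notMem (not_not.2 hy1),
      neg_zero]
  · rw [indicator_of_mem (hball.not.2 hy1), indicator_of_mem (show y ∈ (ball p ε)ᶜ from hy1)]
    by_cases hy2 : y ∈ {y | ℓ y < ℓ p} <;> simp [hhalf, hk, hy2]

end HaarMeasure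

local notation "E2" => EuclideanSpace ℝ (Fin 2)

def belowLine (b : ℝ) : Set E2 := {y | y 1 < b * y 0}

theorem measurableSet_belowLine (b : ℝ) : MeasurableSet (belowLine b) :=
  measurableSet_lt (by fun_prop) (by fun_prop)

theorem measurableSet_coneSet (b : ℝ) : MeasurableSet (coneSet b) := by
  unfold coneSet; measurability

theorem belowLine_eq_setOf_lt (b : ℝ) :
    belowLine b = {y | (EuclideanSpace.proj 1 - b • EuclideanSpace.proj 0 : E2 →L[ℝ] ℝ) y < 0} := by
  ext y; simp [belowLine]

theorem mem_coneSet_iff_of_nonneg {b : ℝ} {y : E2} (hy : 0 ≤ y 0) :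
    y ∈ coneSet b ↔ y ∈ belowLine b := by
  refine ⟨?_, fun h => Or.inr ⟨hy, h⟩⟩
  rintro (⟨hy0, -⟩ | ⟨-, h⟩)
  · exact absurd hy0 hy.not_gt
  · exact h

theorem coneSet_subset_belowLine_or_belowLine_subset_coneSet (b : ℝ) :
    coneSet b ⊆ belowLine b ∨ belowLine b ⊆ coneSet b := by
  rcases le_total b 0 with hb | hb
  · refine Or.inl ?_
    rintro y (⟨hy0, hy1⟩ | ⟨-, h⟩)
    · show y 1 < b * y 0
      nlinarith
    · exact h
  · refine Or.inr fun y (h : y 1 < b * y 0) => ?_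
    by_cases hy0 : y 0 < 0
    · exact Or.inl ⟨hy0, by nlinarith⟩
    · exact Or.inr ⟨not_lt.1 hy0, h⟩

theorem symmDiff_coneSet_belowLine_subset (b : ℝ) :
    symmDiff (coneSet b) (belowLine b) ⊆ {y | y 0 < 0} := by
  intro y hy
  by_contra hy0
  have h := mem_coneSet_iff_of_nonneg (b := b) (not_lt.1 hy0)
  rw [mem_symmDiff] at hy
  tauto

theorem volume_symmDiff_coneSet_belowLine_pos {b : ℝ} (hb : b ≠ 0) :
    0 < volume (symmDiff (coneSet b) (belowLine b)) := by
  set wedge : Set E2 := {y | y 0 < 0} ∩ {y | 0 < y 1 * (b * y 0 - y 1)}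
  have hopen : IsOpen wedge :=
    (isOpen_lt (by fun_prop) continuous_const).inter (isOpen_lt continuous_const (by fun_prop))
  have hne : wedge.Nonempty := ⟨!₂[-1, -b / 2], by simp, by simp; nlinarith [sq_pos_of_ne_zero hb]⟩
  have hsub : wedge ⊆ symmDiff (coneSet b) (belowLine b) := by
    rintro y ⟨hy0 : y 0 < 0, hy : 0 < y 1 * (b * y 0 - y 1)⟩
    rw [mem_symmDiff]
    rcases pos_and_pos_or_neg_and_neg_of_mul_pos hy with ⟨h1, h2⟩ | ⟨h1, h2⟩
    · refine Or.inr ⟨(by linarith : y 1 < b * y 0), ?_⟩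
      rintro (⟨-, h⟩ | ⟨h, -⟩) <;> linarith
    · exact Or.inl ⟨Or.inl ⟨hy0, h1⟩, fun h : y 1 < b * y 0 => by linarith⟩
  exact (hopen.measure_pos volume hne).trans_le (measure_mono hsub)

theorem ball_subset_setOf_pos {p : E2} {r : ℝ} (hr : r ≤ p 0) : ball p r ⊆ {y | 0 < y 0} := by
  intro y hy
  have h := (PiLp.dist_apply_le y p 0).trans_lt hy
  rw [Real.dist_eq, abs_sub_lt_iff] at h
  show 0 < y 0
  linarith

theorem integral_indicator_belowLine_sub_coneSet_ne_zero {t b : ℝ} (ht : 2 < t) (hb : b ≠ 0)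
    {p : E2} (hp0 : p 0 = 1) :
    ∫ y, ((belowLine b).indicator (fun _ => (1 : ℝ)) y
      - (coneSet b).indicator (fun _ => (1 : ℝ)) y) * ‖p - y‖ ^ (-t) ≠ 0 := by
  have hfar : symmDiff (coneSet b) (belowLine b) ⊆ (ball p 1)ᶜ := by
    intro y hy hball
    have hleft : y 0 < 0 := symmDiff_coneSet_belowLine_subset b hy
    have hright : 0 < y 0 := ball_subset_setOf_pos hp0.ge hball
    linarith
  refine integral_indicator_one_sub_indicator_one_mul_ne_zero (measurableSet_coneSet b)
    (measurableSet_belowLine b) (coneSet_subset_belowLine_or_belowLine_subset_coneSet b) ?_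
  refine setIntegral_pos_of_pos_on ((measurableSet_coneSet b).symmDiff (measurableSet_belowLine b))
    ((integrableOn_compl_ball_norm_sub_rpow_neg (by simpa using ht) p one_pos).mono_set hfar)
    (fun y hy => ?_) (volume_symmDiff_coneSet_belowLine_pos hb)
  refine Real.rpow_pos_of_pos (norm_sub_pos_iff.2 fun hpy => hfar hy ?_) _
  subst hpy
  exact mem_ball_self one_pos

theorem setIntegral_compl_ball_signed_coneSet_eq {t b : ℝ} (ht : 2 < t) {p : E2}
    (hp0 : p 0 = 1) (hp1 : p 1 = b) {ε : ℝ} (hε : 0 < ε) (hε1 : ε ≤ 1) :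
    ∫ y in (ball p ε)ᶜ, ((coneSet b)ᶜ.indicator (fun _ => (1 : ℝ)) y
        - (coneSet b).indicator (fun _ => (1 : ℝ)) y) * ‖p - y‖ ^ (-t)
      = 2 * ∫ y, ((belowLine b).indicator (fun _ => (1 : ℝ)) y
        - (coneSet b).indicator (fun _ => (1 : ℝ)) y) * ‖p - y‖ ^ (-t) := by
  have hk := integrableOn_compl_ball_norm_sub_rpow_neg (μ := volume) (by simpa using ht) p hε
  have hsym : ∫ y in (ball p ε)ᶜ, ((belowLine b)ᶜ.indicator (fun _ => (1 : ℝ)) y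
      - (belowLine b).indicator (fun _ => (1 : ℝ)) y) * ‖p - y‖ ^ (-t) = 0 := by
    have hℓ : (EuclideanSpace.proj 1 - b • EuclideanSpace.proj 0 : E2 →L[ℝ] ℝ) ≠ 0 := by
      intro h; simpa using congrArg (· (EuclideanSpace.single 1 1)) h
    rw [belowLine_eq_setOf_lt]
    refine setIntegral_compl_ball_signed_halfspace_eq_zero hℓ (by simp [hp0, hp1]) (fun y => ?_) ε
    rw [show p - (p + p - y) = -(p - y) by abel, norm_neg]
  have hlocal : ∫ y in (ball p ε)ᶜ, ((belowLine b).indicator (fun _ => (1 : ℝ)) y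
      - (coneSet b).indicator (fun _ => (1 : ℝ)) y) * ‖p - y‖ ^ (-t)
      = ∫ y, ((belowLine b).indicator (fun _ => (1 : ℝ)) y
        - (coneSet b).indicator (fun _ => (1 : ℝ)) y) * ‖p - y‖ ^ (-t) := by
    refine setIntegral_eq_integral_of_forall_compl_eq_zero fun y hy => ?_
    have hy0 : 0 < y 0 := ball_subset_setOf_pos (hε1.trans hp0.ge) (not_not.1 hy)
    rw [indicator_const_eq_indicator_const (mem_coneSet_iff_of_nonneg hy0.le), sub_self, zero_mul]
  simp_rw [indicator_compl_sub_indicator_mul_eq_add (A := coneSet b) (B := belowLine b)]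
  rw [integral_add (integrableOn_indicator_one_sub_indicator_one_mul (measurableSet_belowLine b)
      (measurableSet_belowLine b).compl hk)
    ((integrableOn_indicator_one_sub_indicator_one_mul (measurableSet_coneSet b)
      (measurableSet_belowLine b) hk).const_mul 2),
    integral_const_mul, hsym, hlocal, zero_add]

theorem cone_mean_curvature_ne_zero_general (s : ℝ) (hs : 0 < s) (b : ℝ) (hb : b ≠ 0)
    (p : EuclideanSpace ℝ (Fin 2)) (hp0 : p 0 = 1) (hp1 : p 1 = b) :
    ∃ L : ℝ, L ≠ 0 ∧
      Tendsto
        (fun ε : ℝ => ∫ y in (Metric.ball p ε)ᶜ,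
          (((coneSet b)ᶜ.indicator (fun _ => (1 : ℝ)) y
              - (coneSet b).indicator (fun _ => (1 : ℝ)) y)
            * ‖p - y‖ ^ (-((2 : ℝ) + s))))
        (𝓝[>] (0 : ℝ)) (𝓝 L) := by
  have ht : (2 : ℝ) < 2 + s := by linarith
  refine ⟨_, mul_ne_zero two_ne_zero (integral_indicator_belowLine_sub_coneSet_ne_zero ht hb hp0),
    tendsto_const_nhds.congr' ?_⟩
  filter_upwards [Ioc_mem_nhdsGT one_pos] with ε ⟨hε, hε1⟩
  exact (setIntegral_compl_ball_signed_coneSet_eq ht hp0 hp1 hε hε1).symm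

/-- If `b ≠ 0`, then at the point `p = (1,b)` the s-mean curvature of the cone
`E₀₀` (lower halfplane for `x₁ < 0`, subgraph of `x₂ = b x₁` for `x₁ > 0`) is nonzero:
the principal value exists and differs from zero. -/
theorem cone_mean_curvature_ne_zero (s : ℝ) (hs : 0 < s) (hs1 : s < 1) (b : ℝ) (hb : b ≠ 0)
    (p : EuclideanSpace ℝ (Fin 2)) (hp0 : p 0 = 1) (hp1 : p 1 = b) :
    ∃ L : ℝ, L ≠ 0 ∧
      Tendsto
        (fun ε : ℝ => ∫ y in (Metric.ball p ε)ᶜ,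
          (((coneSet b)ᶜ.indicator (fun _ => (1 : ℝ)) y
              - (coneSet b).indicator (fun _ => (1 : ℝ)) y)
            * ‖p - y‖ ^ (-((2 : ℝ) + s))))
        (𝓝[>] (0 : ℝ)) (𝓝 L) :=
  cone_mean_curvature_ne_zero_general s hs b hb p hp0 hp1
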